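/- arXiv:1707.09734 — 5 statements merged into one kernel-verified Lean document; each statement's English description precedes it below -/
import Mathlib

section
/- The stationarity condition in n for the cross-entropy ∫ p(X) ln q(X) dX with Σ = (1/n) Z^T, where q is the complex Wishart density CW_{n1}(n, Σ), is n1·ln(n) − ln det(Z) + Y − Σ_{i=1}^{n1} ψ(n−i+1) = 0, where Y = E_p[ln det X] and ψ is the digamma function. -/
open Real Finset

/-- The digamma function `ψ`, the derivative of `ln ∘ Γ`. -/
noncomputable def digamma (x : ℝ) : ℝ := deriv (fun y => Real.log (Real.Gamma y)) x

lemma logGamma_hasDerivAt {x : ℝ} (hx : 0 < x) :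
    HasDerivAt (fun y => Real.log (Real.Gamma y)) (digamma x) x := by
  have hΓ : DifferentiableAt ℝ Real.Gamma x := by
    apply Real.differentiableAt_Gamma
    intro m
    have : (0:ℝ) ≤ m := by positivity
    intro h; rw [h] at hx; linarith
  have hpos : Real.Gamma x ≠ 0 := (Real.Gamma_pos_of_pos hx).ne'
  have : DifferentiableAt ℝ (fun y => Real.log (Real.Gamma y)) x :=
    (Real.differentiableAt_log hpos).comp x hΓ
  exact this.hasDerivAt

/-- Stationarity in the degrees of freedom `n` of the cross-entropy `∫ p ln q`, where `q` is the
complex Wishart density `CW_{n1}(n, Σ)` with `Σ = (1/n) Zᵀ`.  The cross-entropy equals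
`F(n) = -(c + Σᵢ ln Γ(n-i+1)) - n ln det Z + n·n1·ln n - n·n1 + (n - n1) Y`, where
`c = n1(n1-1)/2 · ln π` is the constant part of `ln CΓ_{n1}(n)`, `Z = E_p[X]` and
`Y = E_p[ln det X]`.  Its stationarity condition is
`n1·ln n - ln det Z + Y - Σᵢ ψ(n-i+1) = 0`. -/
theorem wishart_cross_entropy_stationarity_in_n (n1 : ℕ)
    (Z : Matrix (Fin n1) (Fin n1) ℝ) (hZ : 0 < Z.det) (Y : ℝ) (n : ℝ)
    (hn : (n1 : ℝ) < n) :
    deriv (fun t : ℝ =>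
        -((n1 * (n1 - 1) / 2 : ℝ) * Real.log π
            + ∑ i ∈ Finset.range n1, Real.log (Real.Gamma (t - i)))
          - t * Real.log Z.det + t * n1 * Real.log t - t * n1 + (t - n1) * Y) n = 0
      ↔ (n1 : ℝ) * Real.log n - Real.log Z.det + Y
          - ∑ i ∈ Finset.range n1, digamma (n - i) = 0 := by
  have hn0 : 0 < n := lt_of_le_of_lt (by positivity) hn
  have hsum : HasDerivAt (fun t : ℝ => ∑ i ∈ Finset.range n1, Real.log (Real.Gamma (t - i)))
      (∑ i ∈ Finset.range n1, digamma (n - i)) n := by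
    apply HasDerivAt.fun_sum
    intro i hi
    have hi' : (i : ℝ) < n1 := by exact_mod_cast Finset.mem_range.mp hi
    have hpos : 0 < n - i := by linarith
    have h1 : HasDerivAt (fun t : ℝ => t - (i:ℝ)) 1 n := (hasDerivAt_id n).sub_const _
    have := (logGamma_hasDerivAt hpos).comp n h1
    simpa [Function.comp_def] using this
  have hF : HasDerivAt (fun t : ℝ =>
        -((n1 * (n1 - 1) / 2 : ℝ) * Real.log π
            + ∑ i ∈ Finset.range n1, Real.log (Real.Gamma (t - i)))
          - t * Real.log Z.det + t * n1 * Real.log t - t * n1 + (t - n1) * Y)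
      (-((0:ℝ) + ∑ i ∈ Finset.range n1, digamma (n - i)) - 1 * Real.log Z.det + ((1 * (n1:ℝ)) * Real.log n + (n * (n1:ℝ)) * n⁻¹)
          - 1 * (n1:ℝ) + 1 * Y) n :=
    (((((hasDerivAt_const n _).add hsum).neg.sub
      ((hasDerivAt_id n).mul_const _)).add
      (((hasDerivAt_id n).mul_const (n1:ℝ)).mul (Real.hasDerivAt_log hn0.ne'))).sub
      ((hasDerivAt_id n).mul_const (n1:ℝ))).add
      (((hasDerivAt_id n).sub_const _).mul_const Y)
  have hD : -((0:ℝ) + ∑ i ∈ Finset.range n1, digamma (n - i)) - 1 * Real.log Z.det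
      + ((1 * (n1:ℝ)) * Real.log n + (n * (n1:ℝ)) * n⁻¹) - 1 * (n1:ℝ) + 1 * Y
      = (n1:ℝ) * Real.log n - Real.log Z.det + Y - ∑ i ∈ Finset.range n1, digamma (n - i) := by
    have h5 : n * (n1:ℝ) * n⁻¹ = n1 := by
      field_simp
    rw [h5]; ring
  rw [hF.deriv, hD]
end

section
/- For n1×n1 matrices Φ(y), Ψ(y) with entries φ_i(y_j), ψ_i(y_j) and functions ξ, ξ': ∫⋯∫_{[c,d]^{n1}} det Φ(y) · det Ψ(y) · ∏_{n=1}^{n1} ξ(y_n) · Σ_{k=1}^{n1} ξ'(y_k) dy = n1! · Σ_{k=1}^{n1} det( { ∫_c^d φ_i(y) ψ_j(y) ξ(y) U_{k,j}(ξ'(y)) dy }_{1≤i,j≤n1} ), where U_{j,k}(x) = x if k = j and 1 otherwise. -/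
open MeasureTheory Matrix

lemma integral_pi_prod' {n : ℕ} (μ : Measure ℝ) [SigmaFinite μ] (f : Fin n → ℝ → ℝ) :
    ∫ x : Fin n → ℝ, ∏ i, f i (x i) ∂(Measure.pi fun _ => μ) = ∏ i, ∫ t, f i t ∂μ := by
  letI : MeasureSpace ℝ := ⟨μ⟩
  exact MeasureTheory.integral_fintype_prod_eq_prod f

lemma integrable_pi_prod' {n : ℕ} (μ : Measure ℝ) [SigmaFinite μ] (f : Fin n → ℝ → ℝ)
    (hf : ∀ i, Integrable (f i) μ) :
    Integrable (fun x : Fin n → ℝ => ∏ i, f i (x i)) (Measure.pi fun _ => μ) := by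
  letI : MeasureSpace ℝ := ⟨μ⟩
  exact Integrable.fintype_prod hf

-- purely algebraic permutation identity
lemma perm_algebra {n : ℕ} (A B : Fin n → Fin n → ℝ) :
    (∑ σ : Equiv.Perm (Fin n), ∑ τ : Equiv.Perm (Fin n), ∑ k : Fin n,
        (((Equiv.Perm.sign σ : ℤ) : ℝ) * ((Equiv.Perm.sign τ : ℤ) : ℝ)) *
          ∏ j, (if j = k then B (σ j) (τ j) else A (σ j) (τ j)))
      = (n.factorial : ℝ) * ∑ k : Fin n, ∑ ρ : Equiv.Perm (Fin n),
          ((Equiv.Perm.sign ρ : ℤ) : ℝ) * ∏ i, (if i = k then B (ρ i) i else A (ρ i) i) := by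
  classical
  have hsq : ∀ σ : Equiv.Perm (Fin n),
      ((Equiv.Perm.sign σ : ℤ) : ℝ) * ((Equiv.Perm.sign σ : ℤ) : ℝ) = 1 := by
    intro σ
    rw [← Int.cast_mul, ← Units.val_mul, Int.units_mul_self, Units.val_one, Int.cast_one]
  -- canonical form
  have key : ∀ σ τ : Equiv.Perm (Fin n), ∀ k,
      (∏ j, (if j = k then B (σ j) (τ j) else A (σ j) (τ j)))
        = ∏ m, (if m = σ k then B m ((τ * σ⁻¹) m) else A m ((τ * σ⁻¹) m)) := by
    intro σ τ k
    rw [← Equiv.prod_comp σ (fun m => if m = σ k then B m ((τ * σ⁻¹) m) else A m ((τ * σ⁻¹) m))]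
    refine Finset.prod_congr rfl fun j _ => ?_
    simp
  simp only [key]
  -- reindex τ ↦ ρ * σ
  have step2 : ∀ σ : Equiv.Perm (Fin n),
      (∑ τ : Equiv.Perm (Fin n), ∑ k : Fin n,
        (((Equiv.Perm.sign σ : ℤ) : ℝ) * ((Equiv.Perm.sign τ : ℤ) : ℝ)) *
          ∏ m, (if m = σ k then B m ((τ * σ⁻¹) m) else A m ((τ * σ⁻¹) m)))
      = ∑ ρ : Equiv.Perm (Fin n), ∑ k : Fin n,
        ((Equiv.Perm.sign ρ : ℤ) : ℝ) *
          ∏ m, (if m = σ k then B m (ρ m) else A m (ρ m)) := by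
    intro σ
    rw [← Equiv.sum_comp (Equiv.mulRight σ) (fun τ => ∑ k : Fin n,
        (((Equiv.Perm.sign σ : ℤ) : ℝ) * ((Equiv.Perm.sign τ : ℤ) : ℝ)) *
          ∏ m, (if m = σ k then B m ((τ * σ⁻¹) m) else A m ((τ * σ⁻¹) m)))]
    refine Finset.sum_congr rfl fun ρ _ => Finset.sum_congr rfl fun k _ => ?_
    have h1 : (Equiv.mulRight σ ρ) * σ⁻¹ = ρ := by
      simp [Equiv.mulRight, mul_assoc]
    have h2 : ((Equiv.Perm.sign σ : ℤ) : ℝ) *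
        ((Equiv.Perm.sign (Equiv.mulRight σ ρ) : ℤ) : ℝ) = ((Equiv.Perm.sign ρ : ℤ) : ℝ) := by
      simp only [Equiv.coe_mulRight, Equiv.Perm.sign_mul, Units.val_mul, Int.cast_mul]
      rw [mul_comm ((Equiv.Perm.sign ρ : ℤ) : ℝ), ← mul_assoc, hsq, one_mul]
    rw [h1, h2]
  simp only [step2]
  -- now sum over k: reindex k ↦ σ k, then σ sums to a constant
  have step3 : ∀ σ : Equiv.Perm (Fin n),
      (∑ ρ : Equiv.Perm (Fin n), ∑ k : Fin n,
        ((Equiv.Perm.sign ρ : ℤ) : ℝ) * ∏ m, (if m = σ k then B m (ρ m) else A m (ρ m)))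
      = ∑ ρ : Equiv.Perm (Fin n), ∑ k : Fin n,
        ((Equiv.Perm.sign ρ : ℤ) : ℝ) * ∏ m, (if m = k then B m (ρ m) else A m (ρ m)) := by
    intro σ
    refine Finset.sum_congr rfl fun ρ _ => ?_
    exact Equiv.sum_comp σ (fun k => ((Equiv.Perm.sign ρ : ℤ) : ℝ) *
      ∏ m, (if m = k then B m (ρ m) else A m (ρ m)))
  simp only [step3]
  rw [Finset.sum_const, Finset.card_univ, Fintype.card_perm, Fintype.card_fin, nsmul_eq_mul]
  congr 1
  -- hrow : per-permutation row/column switch after summing over k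
  have hp : ∀ (ρ : Equiv.Perm (Fin n)) (k : Fin n),
      (∏ i, (if i = k then B (ρ i) i else A (ρ i) i))
        = ∏ m, (if m = ρ k then B m (ρ⁻¹ m) else A m (ρ⁻¹ m)) := by
    intro ρ k
    rw [← Equiv.prod_comp ρ (fun m => if m = ρ k then B m (ρ⁻¹ m) else A m (ρ⁻¹ m))]
    exact Finset.prod_congr rfl fun i _ => by simp
  have hrow : ∀ ρ : Equiv.Perm (Fin n),
      (∑ k : Fin n, ∏ i, (if i = k then B (ρ i) i else A (ρ i) i))
        = ∑ k : Fin n, ∏ m, (if m = k then B m (ρ⁻¹ m) else A m (ρ⁻¹ m)) := by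
    intro ρ
    simp only [hp]
    exact Equiv.sum_comp ρ (fun k => ∏ m, (if m = k then B m (ρ⁻¹ m) else A m (ρ⁻¹ m)))
  conv_rhs => rw [Finset.sum_comm]
  rw [← Equiv.sum_comp (Equiv.inv (Equiv.Perm (Fin n))) (fun ρ => ∑ k : Fin n,
      ((Equiv.Perm.sign ρ : ℤ) : ℝ) * ∏ m, (if m = k then B m (ρ m) else A m (ρ m)))]
  refine Finset.sum_congr rfl fun ρ _ => ?_
  simp only [Equiv.inv_apply, Equiv.Perm.sign_inv]
  rw [← Finset.mul_sum, ← Finset.mul_sum]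
  congr 1
  simpa using (hrow ρ).symm

lemma sum_rot3 {α β γ : Type*} [Fintype α] [Fintype β] [Fintype γ] (f : α → β → γ → ℝ) :
    ∑ a, ∑ b, ∑ c, f a b c = ∑ c, ∑ b, ∑ a, f a b c := by
  calc ∑ a, ∑ b, ∑ c, f a b c
      = ∑ b, ∑ a, ∑ c, f a b c := Finset.sum_comm
    _ = ∑ b, ∑ c, ∑ a, f a b c := Finset.sum_congr rfl fun b _ => Finset.sum_comm
    _ = ∑ c, ∑ b, ∑ a, f a b c := Finset.sum_comm

/-- Generalized Andréief identity with a linear statistic: for `n1 × n1` determinants of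
`φ_i(y_j)` and `ψ_i(y_j)` and functions `ξ, ξ'`,
`∫_{[c,d]^{n1}} det Φ det Ψ ∏ ξ(y_n) Σ_k ξ'(y_k) dy
  = n1! Σ_k det({∫_c^d φ_i ψ_j ξ U_{k,j}(ξ') dy})`, where `U_{k,j}(t) = t` if `j = k`
and `1` otherwise. -/
theorem andreief_with_linear_statistic {n1 : ℕ} (c d : ℝ)
    (φ ψ : Fin n1 → ℝ → ℝ) (ξ ξ' : ℝ → ℝ)
    (h1 : ∀ i j, IntegrableOn (fun t => φ i t * ψ j t * ξ t) (Set.Icc c d))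
    (h2 : ∀ i j, IntegrableOn (fun t => φ i t * ψ j t * ξ t * ξ' t) (Set.Icc c d)) :
    ∫ x : Fin n1 → ℝ,
        Matrix.det (Matrix.of fun i j => φ i (x j))
          * Matrix.det (Matrix.of fun i j => ψ i (x j))
          * (∏ k, ξ (x k)) * (∑ k, ξ' (x k))
        ∂(Measure.pi fun _ : Fin n1 => volume.restrict (Set.Icc c d))
      = (n1.factorial : ℝ) * ∑ k : Fin n1,
          Matrix.det (Matrix.of fun i j => ∫ t in Set.Icc c d,
            φ i t * ψ j t * ξ t * (if j = k then ξ' t else 1)) := by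
  classical
  set μ : Measure ℝ := volume.restrict (Set.Icc c d) with hμ
  set F : Equiv.Perm (Fin n1) → Equiv.Perm (Fin n1) → Fin n1 → Fin n1 → ℝ → ℝ :=
    fun σ τ k j t => φ (σ j) t * ψ (τ j) t * ξ t * (if j = k then ξ' t else 1) with hF
  have hFi : ∀ σ τ k j, Integrable (F σ τ k j) μ := by
    intro σ τ k j
    by_cases h : j = k
    · simpa [hF, h, IntegrableOn, hμ] using h2 (σ j) (τ j)
    · simpa [hF, h, IntegrableOn, hμ] using h1 (σ j) (τ j)
  -- Step 1 : pointwise expansion of the integrand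
  have step1 : ∀ x : Fin n1 → ℝ,
      Matrix.det (Matrix.of fun i j => φ i (x j))
          * Matrix.det (Matrix.of fun i j => ψ i (x j))
          * (∏ k, ξ (x k)) * (∑ k, ξ' (x k))
        = ∑ k : Fin n1, ∑ τ : Equiv.Perm (Fin n1), ∑ σ : Equiv.Perm (Fin n1),
            (((Equiv.Perm.sign σ : ℤ) : ℝ) * ((Equiv.Perm.sign τ : ℤ) : ℝ)) *
              ∏ j, F σ τ k j (x j) := by
    intro x
    have hprod : ∀ (σ τ : Equiv.Perm (Fin n1)) (k : Fin n1),
        (∏ j, F σ τ k j (x j))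
          = (∏ j, φ (σ j) (x j)) * (∏ j, ψ (τ j) (x j)) * (∏ j, ξ (x j)) * ξ' (x k) := by
      intro σ τ k
      simp only [hF]
      rw [Finset.prod_mul_distrib, Finset.prod_mul_distrib, Finset.prod_mul_distrib]
      congr 1
      simp
    rw [Matrix.det_apply', Matrix.det_apply']
    simp only [Matrix.of_apply, Finset.sum_mul, Finset.mul_sum]
    refine Finset.sum_congr rfl fun k _ => ?_
    refine Finset.sum_congr rfl fun τ _ => ?_
    refine Finset.sum_congr rfl fun σ _ => ?_
    rw [hprod]
    ring
  simp only [step1]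
  -- Step 2 : exchange integral and finite sums, Fubini
  rw [integral_finset_sum _ (fun k _ => integrable_finset_sum _ (fun τ _ =>
    integrable_finset_sum _ (fun σ _ =>
      ((integrable_pi_prod' μ _ (fun j => hFi σ τ k j)).const_mul _))))]
  have step2 : ∀ k : Fin n1,
      (∫ x : Fin n1 → ℝ, (∑ τ : Equiv.Perm (Fin n1), ∑ σ : Equiv.Perm (Fin n1),
          (((Equiv.Perm.sign σ : ℤ) : ℝ) * ((Equiv.Perm.sign τ : ℤ) : ℝ)) *
            ∏ j, F σ τ k j (x j)) ∂(Measure.pi fun _ : Fin n1 => μ))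
        = ∑ τ : Equiv.Perm (Fin n1), ∑ σ : Equiv.Perm (Fin n1),
            (((Equiv.Perm.sign σ : ℤ) : ℝ) * ((Equiv.Perm.sign τ : ℤ) : ℝ)) *
              ∏ j, ∫ t, F σ τ k j t ∂μ := by
    intro k
    rw [integral_finset_sum _ (fun τ _ => integrable_finset_sum _ (fun σ _ =>
      ((integrable_pi_prod' μ _ (fun j => hFi σ τ k j)).const_mul _)))]
    refine Finset.sum_congr rfl fun τ _ => ?_
    rw [integral_finset_sum _ (fun σ _ =>
      ((integrable_pi_prod' μ _ (fun j => hFi σ τ k j)).const_mul _))]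
    refine Finset.sum_congr rfl fun σ _ => ?_
    rw [integral_const_mul, integral_pi_prod']
  simp only [step2]
  -- Step 3 : identify the single-variable integrals
  set A : Fin n1 → Fin n1 → ℝ := fun i i' => ∫ t, φ i t * ψ i' t * ξ t ∂μ with hA
  set B : Fin n1 → Fin n1 → ℝ := fun i i' => ∫ t, φ i t * ψ i' t * ξ t * ξ' t ∂μ with hB
  have step3 : ∀ (σ τ : Equiv.Perm (Fin n1)) (k j : Fin n1),
      (∫ t, F σ τ k j t ∂μ) = if j = k then B (σ j) (τ j) else A (σ j) (τ j) := by
    intro σ τ k j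
    by_cases h : j = k <;> simp [hF, hA, hB, h]
  simp only [step3]
  -- Step 4 : rewrite the RHS determinant entries
  have hRHS : ∀ (k : Fin n1) (i j : Fin n1),
      (∫ t in Set.Icc c d, φ i t * ψ j t * ξ t * (if j = k then ξ' t else 1))
        = if j = k then B i j else A i j := by
    intro k i j
    by_cases h : j = k <;> simp [hA, hB, hμ, h]
  simp only [hμ, hRHS]
  -- Step 5 : pure algebra
  rw [sum_rot3 (fun k τ σ =>
    (((Equiv.Perm.sign σ : ℤ) : ℝ) * ((Equiv.Perm.sign τ : ℤ) : ℝ)) *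
      ∏ j, (if j = k then B (σ j) (τ j) else A (σ j) (τ j)))]
  rw [perm_algebra A B]
  congr 1
  refine Finset.sum_congr rfl fun k _ => ?_
  rw [Matrix.det_apply']
  exact Finset.sum_congr rfl fun ρ _ => rfl
end

section
/- (Andréief identity) ∫⋯∫_{[c,d]^{N}} det({φ_i(y_j)}) · det({ψ_i(y_j)}) · ∏_{k=1}^{N} ρ(y_k) dy_1⋯dy_N = N! · det( { ∫_c^d φ_i(y) ψ_j(y) ρ(y) dy }_{1≤i,j≤N} ). -/
open MeasureTheory Matrix Equiv

/-- Type synonym for `ℝ` equipped with the measure `volume.restrict (Set.Icc c d)`. -/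
def AndreiefAux.X (_c _d : ℝ) : Type := ℝ

namespace AndreiefAux

instance (c d : ℝ) : MeasurableSpace (X c d) :=
  (inferInstance : MeasurableSpace ℝ)

noncomputable instance (c d : ℝ) : MeasureSpace (X c d) :=
  ⟨(volume : Measure ℝ).restrict (Set.Icc c d)⟩

instance (c d : ℝ) : SigmaFinite (volume : Measure (X c d)) :=
  (inferInstance : SigmaFinite ((volume : Measure ℝ).restrict (Set.Icc c d)))

end AndreiefAux

/-- Andréief identity:
`∫_{[c,d]^N} det({φ_i(y_j)}) det({ψ_i(y_j)}) ∏_k ρ(y_k) dy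
  = N! det({∫_c^d φ_i(y) ψ_j(y) ρ(y) dy})`. -/
theorem andreief_identity {N : ℕ} (c d : ℝ)
    (φ ψ : Fin N → ℝ → ℝ) (ρ : ℝ → ℝ)
    (h : ∀ i j, IntegrableOn (fun t => φ i t * ψ j t * ρ t) (Set.Icc c d)) :
    ∫ x : Fin N → ℝ,
        Matrix.det (Matrix.of fun i j => φ i (x j))
          * Matrix.det (Matrix.of fun i j => ψ i (x j))
          * ∏ k, ρ (x k)
        ∂(Measure.pi fun _ : Fin N => volume.restrict (Set.Icc c d))
      = (N.factorial : ℝ) *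
          Matrix.det (Matrix.of fun i j => ∫ t in Set.Icc c d, φ i t * ψ j t * ρ t) := by
  classical
  set A : Matrix (Fin N) (Fin N) ℝ :=
    Matrix.of fun i j => ∫ t in Set.Icc c d, φ i t * ψ j t * ρ t with hA
  -- pointwise expansion of the integrand
  have hpt : ∀ x : Fin N → ℝ,
      Matrix.det (Matrix.of fun i j => φ i (x j))
          * Matrix.det (Matrix.of fun i j => ψ i (x j)) * ∏ k, ρ (x k)
        = ∑ σ : Perm (Fin N), ∑ τ : Perm (Fin N),
            (((Perm.sign σ : ℤ) : ℝ) * ((Perm.sign τ : ℤ) : ℝ)) *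
              ∏ j, (φ (σ j) (x j) * ψ (τ j) (x j) * ρ (x j)) := by
    intro x
    rw [Matrix.det_apply', Matrix.det_apply', Finset.sum_mul_sum, Finset.sum_mul]
    rw [Finset.sum_congr rfl fun σ _ => (Finset.sum_mul _ _ _)]
    refine Finset.sum_congr rfl fun σ _ => Finset.sum_congr rfl fun τ _ => ?_
    simp only [Matrix.of_apply]
    rw [show (∏ j, (φ (σ j) (x j) * ψ (τ j) (x j) * ρ (x j)))
        = (∏ j, φ (σ j) (x j)) * (∏ j, ψ (τ j) (x j)) * ∏ j, ρ (x j) by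
      rw [← Finset.prod_mul_distrib, ← Finset.prod_mul_distrib]]
    ring
  -- view the integral over the pi-measure as a volume integral on the synonym type
  have key : (∫ x : Fin N → ℝ,
        Matrix.det (Matrix.of fun i j => φ i (x j))
          * Matrix.det (Matrix.of fun i j => ψ i (x j)) * ∏ k, ρ (x k)
        ∂(Measure.pi fun _ : Fin N => volume.restrict (Set.Icc c d)))
      = ∑ σ : Perm (Fin N), ∑ τ : Perm (Fin N),
          (((Perm.sign σ : ℤ) : ℝ) * ((Perm.sign τ : ℤ) : ℝ)) *
            ∏ j, A (σ j) (τ j) := by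
    have hInt : ∀ σ τ : Perm (Fin N),
        Integrable (fun x : Fin N → AndreiefAux.X c d =>
          ∏ j, (φ (σ j) (x j) * ψ (τ j) (x j) * ρ (x j))) := by
      intro σ τ
      exact Integrable.fintype_prod (f := fun j (t : AndreiefAux.X c d) =>
        φ (σ j) t * ψ (τ j) t * ρ t) (fun j => h (σ j) (τ j))
    show (∫ x : Fin N → AndreiefAux.X c d,
        Matrix.det (Matrix.of fun i j => φ i (x j))
          * Matrix.det (Matrix.of fun i j => ψ i (x j)) * ∏ k, ρ (x k)) = _
    rw [show (fun x : Fin N → AndreiefAux.X c d =>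
        Matrix.det (Matrix.of fun i j => φ i (x j))
          * Matrix.det (Matrix.of fun i j => ψ i (x j)) * ∏ k, ρ (x k))
      = fun x : Fin N → AndreiefAux.X c d =>
          ∑ σ : Perm (Fin N), ∑ τ : Perm (Fin N),
            (((Perm.sign σ : ℤ) : ℝ) * ((Perm.sign τ : ℤ) : ℝ)) *
              ∏ j, (φ (σ j) (x j) * ψ (τ j) (x j) * ρ (x j)) from funext fun x => hpt x]
    rw [integral_finset_sum _ (fun σ _ => integrable_finset_sum _
      (fun τ _ => ((hInt σ τ).const_mul _)))]
    refine Finset.sum_congr rfl fun σ _ => ?_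
    rw [integral_finset_sum _ (fun τ _ => ((hInt σ τ).const_mul _))]
    refine Finset.sum_congr rfl fun τ _ => ?_
    rw [integral_const_mul]
    congr 1
    rw [integral_fintype_prod_volume_eq_prod (ι := Fin N)
      (f := fun j (t : AndreiefAux.X c d) => φ (σ j) t * ψ (τ j) t * ρ t)]
    rfl
  rw [key]
  -- combinatorial step
  have hcomb : ∀ σ : Perm (Fin N),
      (∑ τ : Perm (Fin N),
        (((Perm.sign σ : ℤ) : ℝ) * ((Perm.sign τ : ℤ) : ℝ)) * ∏ j, A (σ j) (τ j))
      = A.det := by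
    intro σ
    rw [← Equiv.sum_comp (Equiv.mulRight σ) (fun τ => _)]
    have : ∀ π : Perm (Fin N),
        (((Perm.sign σ : ℤ) : ℝ) * ((Perm.sign (π * σ) : ℤ) : ℝ)) *
            ∏ j, A (σ j) ((π * σ) j)
          = ((Perm.sign π : ℤ) : ℝ) * ∏ i, A i (π i) := by
      intro π
      have h1 : ∏ j, A (σ j) ((π * σ) j) = ∏ i, A i (π i) := by
        exact Equiv.prod_comp σ (fun i => A i (π i))
      have h2 : (((Perm.sign σ : ℤ) : ℝ) * ((Perm.sign (π * σ) : ℤ) : ℝ))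
          = ((Perm.sign π : ℤ) : ℝ) := by
        rw [Perm.sign_mul]
        rcases Int.units_eq_one_or (Perm.sign σ) with hs | hs <;>
          rcases Int.units_eq_one_or (Perm.sign π) with hp | hp <;>
          simp [hs, hp]
      rw [h1, h2]
    simp only [Equiv.coe_mulRight]
    rw [Finset.sum_congr rfl fun π _ => this π]
    rw [← Matrix.det_transpose A, Matrix.det_apply']
    rfl
  rw [Finset.sum_congr rfl fun σ _ => hcomb σ, Finset.sum_const, Finset.card_univ,
    Fintype.card_perm, Fintype.card_fin, nsmul_eq_mul]
end

section
/- ∫_0^4 log₂(1 + ρcλ) · (1/π)·√(1/λ − 1/4) dλ = ρc · ₃F₂(1, 1, 3/2; 2, 3; −4ρc) / ln 2, for ρ, c > 0. -/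
open Real MeasureTheory

/-- The Gauss hypergeometric function `₂F₁(a, b; c; z)`, via its Euler integral
representation (valid for `c > b > 0`, `z < 1`). -/
noncomputable def hyp2F1 (a b c z : ℝ) : ℝ :=
  (Real.Gamma c / (Real.Gamma b * Real.Gamma (c - b))) *
    ∫ t in (0:ℝ)..1, t ^ (b - 1) * (1 - t) ^ (c - b - 1) * (1 - z * t) ^ (-a)

/-- The generalized hypergeometric function `₃F₂(a, b, c; d, e; z)`, via the Euler-type
integral representation over `₂F₁` (valid for `e > c > 0`, `z < 1`). -/
noncomputable def hyp3F2 (a b c d e z : ℝ) : ℝ :=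
  (Real.Gamma e / (Real.Gamma c * Real.Gamma (e - c))) *
    ∫ t in (0:ℝ)..1, t ^ (c - 1) * (1 - t) ^ (e - c - 1) * hyp2F1 a b d (z * t)

lemma integral_inv_one_add {w : ℝ} (hw : 0 < w) :
    ∫ t in (0:ℝ)..1, (1 + w * t)⁻¹ = Real.log (1 + w) / w := by
  have key : ∀ t ∈ Set.uIcc (0:ℝ) 1,
      HasDerivAt (fun t => Real.log (1 + w * t) / w) ((1 + w * t)⁻¹) t := by
    intro t ht
    rw [Set.uIcc_of_le (by norm_num)] at ht
    have h1 : HasDerivAt (fun t : ℝ => 1 + w * t) w t := by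
      simpa using ((hasDerivAt_id t).const_mul w).const_add 1
    have hpos : 0 < 1 + w * t := by nlinarith [ht.1]
    have h2 := (h1.log hpos.ne').div_const w
    rw [div_right_comm, div_self hw.ne', one_div] at h2
    exact h2
  have hcont : IntervalIntegrable (fun t => (1 + w * t)⁻¹) volume 0 1 := by
    apply ContinuousOn.intervalIntegrable
    apply ContinuousOn.inv₀ (by fun_prop)
    intro t ht
    rw [Set.uIcc_of_le (by norm_num)] at ht
    have : 0 < 1 + w * t := by nlinarith [ht.1]
    exact this.ne'
  rw [intervalIntegral.integral_eq_sub_of_hasDerivAt key hcont]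
  simp

lemma hyp2F1_val {w : ℝ} (hw : 0 < w) : hyp2F1 1 1 2 (-w) = Real.log (1 + w) / w := by
  unfold hyp2F1
  rw [Real.Gamma_two, show (2:ℝ) - 1 = 1 by norm_num, Real.Gamma_one]
  rw [intervalIntegral.integral_congr (g := fun t => (1 + w * t)⁻¹), integral_inv_one_add hw]
  · norm_num
  · intro t ht
    rw [Set.uIcc_of_le (by norm_num)] at ht
    simp only
    norm_num
    rw [Real.rpow_neg_one]

lemma hyp3F2_val {s : ℝ} (hs : 0 < s) :
    hyp3F2 1 1 (3/2) 2 3 (-(4*s)) =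
      2 / (π * s) * ∫ u in (0:ℝ)..1,
        Real.sqrt (1-u) / Real.sqrt u * Real.log (1+4*s*u) := by
  unfold hyp3F2
  have hΓ3 : Real.Gamma 3 = 2 := by
    rw [show (3:ℝ) = (2:ℕ)+1 by norm_num, Real.Gamma_nat_eq_factorial]; norm_num
  have hΓ : Real.Gamma (3/2) = Real.sqrt π / 2 := by
    rw [show (3/2:ℝ) = 1/2 + 1 by norm_num, Real.Gamma_add_one (by norm_num),
      Real.Gamma_one_half_eq]
    ring
  rw [show (3:ℝ) - 3/2 = 3/2 by norm_num, hΓ3, hΓ]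
  rw [intervalIntegral.integral_congr_ae
    (g := fun u => (1/(4*s)) * (Real.sqrt (1-u) / Real.sqrt u * Real.log (1+4*s*u)))]
  · rw [intervalIntegral.integral_const_mul]
    have hπ := Real.pi_pos
    have h1 : Real.sqrt π * Real.sqrt π = π := Real.mul_self_sqrt hπ.le
    have h2 : Real.sqrt π ≠ 0 := by positivity
    set I := ∫ u in (0:ℝ)..1, Real.sqrt (1-u) / Real.sqrt u * Real.log (1+4*s*u) with hI
    field_simp
    rw [Real.sq_sqrt hπ.le]
    ring
  · filter_upwards with u hu
    rw [Set.uIoc_of_le (by norm_num : (0:ℝ) ≤ 1)] at hu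
    obtain ⟨hu0, hu1⟩ := hu
    have hw : 0 < 4*s*u := by positivity
    have h2F1 := hyp2F1_val hw
    rw [show -(4*s)*u = -(4*s*u) by ring, h2F1,
      show (3/2:ℝ) - 1 = 1/(2:ℝ) by norm_num, ← Real.sqrt_eq_rpow, ← Real.sqrt_eq_rpow]
    have hsq : Real.sqrt u * Real.sqrt u = u := Real.mul_self_sqrt hu0.le
    have hsu : Real.sqrt u ≠ 0 := by positivity
    field_simp
    linear_combination (Real.sqrt (1-u)*Real.log (1+u*4*s)) * hsq

/-- `∫_0^4 log₂(1 + ρcλ) (1/π)√(1/λ - 1/4) dλ = ρc ₃F₂(1,1,3/2;2,3;-4ρc)/ln 2`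
for `ρ, c > 0`. -/
theorem mp_capacity_integral (ρ c : ℝ) (hρ : 0 < ρ) (hc : 0 < c) :
    ∫ t in (0:ℝ)..4, Real.logb 2 (1 + ρ * c * t) * (1 / π * Real.sqrt (1 / t - 1 / 4))
      = ρ * c * hyp3F2 1 1 (3 / 2) 2 3 (-(4 * ρ * c)) / Real.log 2 := by
  set s := ρ * c with hsdef
  have hs : 0 < s := mul_pos hρ hc
  have hπ := Real.pi_pos
  have hlog2 : Real.log 2 ≠ 0 := by
    have := Real.log_pos (by norm_num : (1:ℝ) < 2); linarith
  -- substitution t = 4u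
  have hsub : (∫ t in (0:ℝ)..4,
      Real.logb 2 (1 + s * t) * (1 / π * Real.sqrt (1 / t - 1 / 4)))
      = 4 * ∫ u in (0:ℝ)..1,
        Real.logb 2 (1 + s * (4*u)) * (1 / π * Real.sqrt (1 / (4*u) - 1 / 4)) := by
    have h := intervalIntegral.smul_integral_comp_mul_left (a := 0) (b := 1)
      (fun t => Real.logb 2 (1 + s * t) * (1 / π * Real.sqrt (1 / t - 1 / 4))) 4
    simp only [smul_eq_mul, mul_zero, mul_one] at h
    exact h.symm
  rw [hsub]
  have hcongr : (∫ u in (0:ℝ)..1,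
      Real.logb 2 (1 + s * (4*u)) * (1 / π * Real.sqrt (1 / (4*u) - 1 / 4)))
      = ∫ u in (0:ℝ)..1, (1/(2*π*Real.log 2)) *
        (Real.sqrt (1-u) / Real.sqrt u * Real.log (1+4*s*u)) := by
    apply intervalIntegral.integral_congr_ae
    filter_upwards with u hu
    rw [Set.uIoc_of_le (by norm_num : (0:ℝ) ≤ 1)] at hu
    obtain ⟨hu0, hu1⟩ := hu
    have hq : 1 / (4*u) - 1/4 = (1-u)/(4*u) := by
      field_simp
    have hsqrt : Real.sqrt ((1-u)/(4*u)) = Real.sqrt (1-u) / (2 * Real.sqrt u) := by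
      rw [Real.sqrt_div (by linarith : (0:ℝ) ≤ 1-u),
        show (4:ℝ)*u = 2^2*u by ring, Real.sqrt_mul (by norm_num : (0:ℝ) ≤ 2^2),
        Real.sqrt_sq (by norm_num : (0:ℝ) ≤ 2)]
    rw [hq, hsqrt, Real.logb, show 1 + s*(4*u) = 1 + 4*s*u by ring]
    have hsu : Real.sqrt u ≠ 0 := by positivity
    field_simp
  rw [hcongr, intervalIntegral.integral_const_mul,
    show -(4*ρ*c) = -(4*s) by rw [hsdef]; ring, hyp3F2_val hs]
  set I := ∫ u in (0:ℝ)..1, Real.sqrt (1-u) / Real.sqrt u * Real.log (1+4*s*u) with hI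
  field_simp
  ring
end

section
/- ∫_0^4 log₂(λ) · (1/π)·√(1/λ − 1/4) dλ = −log₂(e)·1 + 0, i.e., ∫_0^4 ln(λ)·(1/π)√(1/λ − 1/4) dλ = −1; hence the high-SNR asymptotic normalized capacity is log₂(ρ/e) + log₂(w₁). -/
open Real MeasureTheory Set Filter Topology intervalIntegral


lemma intInt_log {b : ℝ} (hb : 0 < b) : IntervalIntegrable Real.log volume 0 b := by
  rw [intervalIntegrable_iff_integrableOn_Ioc_of_le hb.le]
  have key : IntegrableOn (fun x : ℝ => -Real.log x) (Ioc (0:ℝ) 1) volume := by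
    apply integrableOn_deriv_of_nonneg (g := fun x : ℝ => x - x * Real.log x)
      (g' := fun x : ℝ => -Real.log x)
    · intro x hx
      rcases eq_or_ne x 0 with rfl | hx0
      · rw [← continuousWithinAt_diff_self]
        have hsub : Icc (0:ℝ) 1 \ {0} ⊆ Ioi 0 := by
          rintro y ⟨⟨h0, _⟩, hy⟩; exact lt_of_le_of_ne h0 (Ne.symm hy)
        have h2 : Tendsto (fun x : ℝ => x - x * Real.log x) (𝓝[>] (0:ℝ)) (𝓝 0) := by
          have hl := tendsto_log_mul_rpow_nhdsGT_zero (r := 1) one_pos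
          simp only [rpow_one] at hl
          have h3 : Tendsto (fun x : ℝ => x - Real.log x * x) (𝓝[>] (0:ℝ)) (𝓝 (0 - 0)) :=
            (tendsto_nhdsWithin_of_tendsto_nhds tendsto_id).sub hl
          simpa [mul_comm] using h3
        unfold ContinuousWithinAt
        have h5 : (fun x : ℝ => x - x * Real.log x) 0 = 0 := by norm_num
        rw [h5]
        exact h2.mono_left (nhdsWithin_mono _ hsub)
      · exact (continuousAt_id.sub
          (continuousAt_id.mul (Real.continuousAt_log hx0))).continuousWithinAt
    · intro x hx
      have h1 := Real.hasDerivAt_mul_log (ne_of_gt hx.1)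
      have h2 : HasDerivAt (fun x : ℝ => x - x * Real.log x) (1 - (Real.log x + 1)) x :=
        (hasDerivAt_id x).sub h1
      simpa using h2
    · intro x hx
      simp only [neg_nonneg]
      exact Real.log_nonpos hx.1.le hx.2.le
  have h1 : IntegrableOn Real.log (Ioc (0:ℝ) 1) volume := by
    exact key.neg.congr (ae_of_all _ fun x => by simp)
  have h2 : IntegrableOn Real.log (Icc (1:ℝ) (max 1 b)) volume := by
    apply ContinuousOn.integrableOn_compact isCompact_Icc
    exact Real.continuousOn_log.mono (by rintro x ⟨hx, _⟩; simp; linarith)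
  refine (h1.union h2).mono_set ?_
  rintro x ⟨hx0, hxb⟩
  rcases le_total x 1 with h | h
  · exact Or.inl ⟨hx0, h⟩
  · exact Or.inr ⟨h, le_max_of_le_right hxb⟩

lemma intInt_log_sin : IntervalIntegrable (fun x => Real.log (Real.sin x)) volume 0 (π/2) := by
  rw [intervalIntegrable_iff_integrableOn_Ioc_of_le (le_of_lt (by positivity))]
  have hmeas : AEStronglyMeasurable (fun x => Real.log (Real.sin x))
      (volume.restrict (Ioc (0:ℝ) (π/2))) :=
    (Real.measurable_log.comp Real.measurable_sin).aestronglyMeasurable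
  have hbound : IntegrableOn (fun x : ℝ => |Real.log x| + Real.log (π/2)) (Ioc (0:ℝ) (π/2))
      volume := by
    apply Integrable.add
    · exact ((intInt_log (by positivity)).1).abs
    · exact integrableOn_const measure_Ioc_lt_top.ne
  apply hbound.integrable.mono' hmeas
  filter_upwards [ae_restrict_mem measurableSet_Ioc] with x hx
  have hx0 : 0 < x := hx.1
  have hx2 : x ≤ π/2 := hx.2
  have hs : 0 < Real.sin x := Real.sin_pos_of_pos_of_lt_pi hx0 (lt_of_le_of_lt hx2 (by
    have := Real.pi_pos; linarith))
  have hub : Real.log (Real.sin x) ≤ Real.log x :=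
    Real.log_le_log hs (Real.sin_le hx0.le)
  have hlb : Real.log (2/π) + Real.log x ≤ Real.log (Real.sin x) := by
    have h1 : 2/π * x ≤ Real.sin x := Real.mul_le_sin hx0.le hx2
    have h2 : Real.log (2/π * x) ≤ Real.log (Real.sin x) :=
      Real.log_le_log (by positivity) h1
    rwa [Real.log_mul (by positivity) (ne_of_gt hx0)] at h2
  have hlog2 : Real.log (2/π) = - Real.log (π/2) := by
    rw [← Real.log_inv]; norm_num
  rw [Real.norm_eq_abs, abs_le]
  constructor
  · have := abs_nonneg (Real.log x)
    have h3 : -(|Real.log x|) ≤ Real.log x := neg_abs_le _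
    nlinarith [neg_abs_le (Real.log x), hlb, hlog2]
  · calc Real.log (Real.sin x) ≤ Real.log x := hub
      _ ≤ |Real.log x| := le_abs_self _
      _ ≤ |Real.log x| + Real.log (π/2) := by
          have : (0:ℝ) ≤ Real.log (π/2) := Real.log_nonneg (by nlinarith [Real.pi_gt_three])
          linarith

lemma intInt_log_sin_two : IntervalIntegrable (fun x => Real.log (Real.sin x)) volume (π/2) π := by
  have h := intInt_log_sin.comp_sub_left π
  simp only [sub_zero] at h
  have h2 : π - π/2 = π/2 := by ring
  rw [h2] at h
  have h3 : (fun x => Real.log (Real.sin (π - x))) = fun x => Real.log (Real.sin x) := by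
    funext x; rw [Real.sin_pi_sub]
  rw [h3] at h
  exact h.symm

lemma intInt_log_cos : IntervalIntegrable (fun x => Real.log (Real.cos x)) volume 0 (π/2) := by
  have h := intInt_log_sin.comp_sub_left (π/2)
  simp only [sub_zero, sub_self] at h
  have h3 : (fun x => Real.log (Real.sin (π/2 - x))) = fun x => Real.log (Real.cos x) := by
    funext x; rw [Real.sin_pi_div_two_sub]
  rw [h3] at h
  exact h.symm

lemma int_log_sin : ∫ x in (0:ℝ)..(π/2), Real.log (Real.sin x) = -(π/2) * Real.log 2 := by
  set I := ∫ x in (0:ℝ)..(π/2), Real.log (Real.sin x) with hI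
  have hpi := Real.pi_pos
  -- second half equals I
  have hsym : ∫ x in (π/2:ℝ)..π, Real.log (Real.sin x) = I := by
    have h := integral_comp_sub_left (a := (0:ℝ)) (b := π/2)
      (fun x => Real.log (Real.sin x)) π
    simp only [sub_zero] at h
    have h2 : π - π/2 = π/2 := by ring
    rw [h2] at h
    have h3 : (fun x => Real.log (Real.sin (π - x))) = fun x => Real.log (Real.sin x) := by
      funext x; rw [Real.sin_pi_sub]
    rw [h3] at h
    rw [← h, hI]
  have hsplit : ∫ x in (0:ℝ)..π, Real.log (Real.sin x) = 2 * I := by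
    rw [← integral_add_adjacent_intervals intInt_log_sin intInt_log_sin_two, hsym, ← hI]
    ring
  -- cos integral equals I
  have hcos : ∫ x in (0:ℝ)..(π/2), Real.log (Real.cos x) = I := by
    have h := integral_comp_sub_left (a := (0:ℝ)) (b := π/2)
      (fun x => Real.log (Real.sin x)) (π/2)
    simp only [sub_zero, sub_self] at h
    have h3 : (fun x => Real.log (Real.sin (π/2 - x))) = fun x => Real.log (Real.cos x) := by
      funext x; rw [Real.sin_pi_div_two_sub]
    rw [h3] at h
    exact h.trans hI.symm
  -- doubling
  have hdouble : ∫ x in (0:ℝ)..(π/2), Real.log (Real.sin (2*x)) = I := by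
    have h := integral_comp_mul_left (a := (0:ℝ)) (b := π/2)
      (fun x => Real.log (Real.sin x)) (two_ne_zero)
    simp only [smul_eq_mul, mul_zero] at h
    have e : 2*(π/2) = π := by ring
    rw [e] at h
    rw [h, hsplit]; ring
  -- expand log sin(2x) a.e.
  have hexp : ∫ x in (0:ℝ)..(π/2), Real.log (Real.sin (2*x))
      = ∫ x in (0:ℝ)..(π/2), (Real.log 2 + Real.log (Real.sin x) + Real.log (Real.cos x)) := by
    apply intervalIntegral.integral_congr_ae
    have hz : (volume : Measure ℝ) {(π/2 : ℝ)} = 0 := measure_singleton _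
    filter_upwards [compl_mem_ae_iff.2 hz] with x hx hmem
    rw [uIoc_of_le (by positivity)] at hmem
    have hx0 : 0 < x := hmem.1
    have hx2 : x < π/2 := lt_of_le_of_ne hmem.2 hx
    have hs : 0 < Real.sin x := Real.sin_pos_of_pos_of_lt_pi hx0 (by linarith)
    have hc : 0 < Real.cos x := Real.cos_pos_of_mem_Ioo ⟨by linarith, hx2⟩
    rw [Real.sin_two_mul, Real.log_mul (by positivity) (ne_of_gt hc),
      Real.log_mul two_ne_zero (ne_of_gt hs)]
  have hval : ∫ x in (0:ℝ)..(π/2), (Real.log 2 + Real.log (Real.sin x) + Real.log (Real.cos x))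
      = π/2 * Real.log 2 + I + I := by
    rw [integral_add ((intervalIntegrable_const (c := Real.log 2)).add
        intInt_log_sin) intInt_log_cos,
      integral_add (intervalIntegrable_const (c := Real.log 2)) intInt_log_sin,
      intervalIntegral.integral_const, hcos, ← hI]
    simp only [smul_eq_mul]
    ring
  have : I = π/2 * Real.log 2 + I + I := by rw [← hval, ← hexp, hdouble]
  linarith

lemma intInt_cos2_log_sin :
    IntervalIntegrable (fun u => Real.cos (2*u) * Real.log (Real.sin u)) volume 0 (π/2) :=
  intInt_log_sin.continuousOn_mul (Continuous.continuousOn (by continuity))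

lemma int_cos2_log_sin :
    ∫ u in (0:ℝ)..(π/2), Real.cos (2*u) * Real.log (Real.sin u) = -(π/4) := by
  have hpi := Real.pi_pos
  have key : ∫ u in (0:ℝ)..(π/2),
      (Real.cos (2*u) * Real.log (Real.sin u) + Real.cos u ^ 2)
      = (fun u => Real.sin (2*u)/2 * Real.log (Real.sin u)) (π/2)
        - (fun u => Real.sin (2*u)/2 * Real.log (Real.sin u)) 0 := by
    apply intervalIntegral.integral_eq_sub_of_hasDeriv_right_of_le
      (f := fun u => Real.sin (2*u)/2 * Real.log (Real.sin u))
      (f' := fun u => Real.cos (2*u) * Real.log (Real.sin u) + Real.cos u ^ 2)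
      (by positivity)
    · -- continuity of F on Icc
      have hF : (fun u => Real.sin (2*u)/2 * Real.log (Real.sin u))
          = fun u => (Real.sin u * Real.log (Real.sin u)) * Real.cos u := by
        funext u; rw [Real.sin_two_mul]; ring
      rw [hF]
      intro x hx
      rcases eq_or_ne x 0 with rfl | hx0
      · rw [← continuousWithinAt_diff_self]
        have hsub : Icc (0:ℝ) (π/2) \ {0} ⊆ Ioc 0 (π/2) := by
          rintro y ⟨⟨h0, h1⟩, hy⟩; exact ⟨lt_of_le_of_ne h0 (Ne.symm hy), h1⟩
        unfold ContinuousWithinAt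
        have h5 : (fun u => (Real.sin u * Real.log (Real.sin u)) * Real.cos u) 0 = 0 := by simp
        rw [h5]
        have hsin : Tendsto Real.sin (𝓝[Ioc (0:ℝ) (π/2)] 0) (𝓝[>] 0) := by
          rw [tendsto_nhdsWithin_iff]
          constructor
          · exact (Real.continuous_sin.tendsto' 0 0 (by simp)).mono_left nhdsWithin_le_nhds
          · filter_upwards [self_mem_nhdsWithin] with y hy
            exact Real.sin_pos_of_pos_of_lt_pi hy.1 (lt_of_le_of_lt hy.2 (by linarith))
        have hxlx : Tendsto (fun y : ℝ => y * Real.log y) (𝓝[>] (0:ℝ)) (𝓝 0) := by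
          have hl := tendsto_log_mul_rpow_nhdsGT_zero (r := 1) one_pos
          simp only [rpow_one] at hl
          simpa [mul_comm] using hl
        have h6 : Tendsto (fun u => Real.sin u * Real.log (Real.sin u))
            (𝓝[Ioc (0:ℝ) (π/2)] 0) (𝓝 0) := hxlx.comp hsin
        have h7 : Tendsto Real.cos (𝓝[Ioc (0:ℝ) (π/2)] 0) (𝓝 1) :=
          (Real.continuous_cos.tendsto' 0 1 (by simp)).mono_left nhdsWithin_le_nhds
        have := h6.mul h7
        rw [mul_one] at this
        exact this.mono_left (nhdsWithin_mono _ hsub)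
      · have hxmem : 0 < x := lt_of_le_of_ne hx.1 (Ne.symm hx0)
        have hs : 0 < Real.sin x :=
          Real.sin_pos_of_pos_of_lt_pi hxmem (lt_of_le_of_lt hx.2 (by linarith))
        exact (((Real.continuous_sin.continuousAt).mul
          ((Real.continuousAt_log (ne_of_gt hs)).comp Real.continuous_sin.continuousAt)).mul
          Real.continuous_cos.continuousAt).continuousWithinAt
    · -- derivative on Ioo
      intro x hx
      have hs : 0 < Real.sin x :=
        Real.sin_pos_of_pos_of_lt_pi hx.1 (lt_of_lt_of_le hx.2 (by linarith))
      have hinner : HasDerivAt (fun u : ℝ => 2*u) 2 x := by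
        simpa using (hasDerivAt_id x).const_mul (2:ℝ)
      have h1 : HasDerivAt (fun u : ℝ => Real.sin (2*u)) (Real.cos (2*x) * 2) x :=
        (Real.hasDerivAt_sin (2*x)).comp x hinner
      have h2 : HasDerivAt (fun u : ℝ => Real.sin (2*u)/2) (Real.cos (2*x)) x := by
        have h : HasDerivAt (fun u : ℝ => Real.sin (2*u)/2) (Real.cos (2*x) * 2 / 2) x :=
          h1.div_const 2
        convert h using 1
        ring
      have h3 : HasDerivAt (fun u : ℝ => Real.log (Real.sin u))
          ((Real.sin x)⁻¹ * Real.cos x) x :=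
        (Real.hasDerivAt_log (ne_of_gt hs)).comp x (Real.hasDerivAt_sin x)
      have h4 := h2.mul h3
      have heq : Real.cos (2*x) * Real.log (Real.sin x)
          + Real.sin (2*x)/2 * ((Real.sin x)⁻¹ * Real.cos x)
          = Real.cos (2*x) * Real.log (Real.sin x) + Real.cos x ^ 2 := by
        rw [Real.sin_two_mul]
        field_simp
      rw [heq] at h4
      exact h4.hasDerivWithinAt
    · exact intInt_cos2_log_sin.add ((Real.continuous_cos.pow 2).intervalIntegrable _ _)
  have hc2 : ∫ u in (0:ℝ)..(π/2), Real.cos u ^ 2 = π/4 := by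
    rw [integral_cos_sq]
    simp [Real.cos_pi_div_two, Real.sin_pi_div_two]
    ring
  rw [integral_add (g := fun u => Real.cos u ^ 2) intInt_cos2_log_sin
    ((Real.continuous_cos.pow 2).intervalIntegrable _ _)] at key
  simp only [Real.sin_pi_div_two] at key
  have h0 : Real.sin (2*(π/2 : ℝ)) = 0 := by
    have : 2*(π/2 : ℝ) = π := by ring
    rw [this, Real.sin_pi]
  rw [h0] at key
  simp at key
  linarith [key, hc2]

lemma int_cos2 : ∫ u in (0:ℝ)..(π/2), Real.cos (2*u) = 0 := by
  have h := integral_comp_mul_left (a := (0:ℝ)) (b := π/2) (fun x => Real.cos x) two_ne_zero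
  simp only [smul_eq_mul, mul_zero] at h
  have e : 2*(π/2) = π := by ring
  rw [e] at h
  rw [h, integral_cos]
  simp

lemma intInt_one_add_cos2 :
    IntervalIntegrable (fun u : ℝ => 1 + Real.cos (2*u)) volume 0 (π/2) :=
  (Continuous.intervalIntegrable (by continuity) _ _)

lemma int_one_add_cos2 : ∫ u in (0:ℝ)..(π/2), (1 + Real.cos (2*u)) = π/2 := by
  rw [integral_add (intervalIntegrable_const (c := (1:ℝ)))
    (Continuous.intervalIntegrable (by continuity) _ _), int_cos2,
    intervalIntegral.integral_const]
  simp

lemma intInt_C : IntervalIntegrable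
    (fun u : ℝ => (1 + Real.cos (2*u)) * Real.log (2 * Real.sin u)) volume 0 (π/2) := by
  rw [intervalIntegrable_iff_integrableOn_Ioc_of_le (le_of_lt (by positivity))]
  have hgood : IntegrableOn
      (fun u : ℝ => (1 + Real.cos (2*u)) * (Real.log 2 + Real.log (Real.sin u)))
      (Ioc (0:ℝ) (π/2)) volume := by
    have h : IntervalIntegrable
        (fun u : ℝ => (1 + Real.cos (2*u)) * (Real.log 2 + Real.log (Real.sin u)))
        volume 0 (π/2) :=
      ((intervalIntegrable_const (c := Real.log 2)).add
        intInt_log_sin).continuousOn_mul (Continuous.continuousOn (by continuity))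
    rwa [intervalIntegrable_iff_integrableOn_Ioc_of_le (le_of_lt (by positivity))] at h
  apply hgood.congr_fun _ measurableSet_Ioc
  intro x hx
  have hpi := Real.pi_pos
  have hs : 0 < Real.sin x := Real.sin_pos_of_pos_of_lt_pi hx.1 (by linarith [hx.2])
  simp only
  rw [Real.log_mul two_ne_zero (ne_of_gt hs)]

lemma int_C : ∫ u in (0:ℝ)..(π/2), (1 + Real.cos (2*u)) * Real.log (2 * Real.sin u)
    = -(π/4) := by
  have hpi := Real.pi_pos
  have hexp : ∫ u in (0:ℝ)..(π/2), (1 + Real.cos (2*u)) * Real.log (2 * Real.sin u)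
      = ∫ u in (0:ℝ)..(π/2), ((1 + Real.cos (2*u)) * Real.log 2
        + (Real.log (Real.sin u) + Real.cos (2*u) * Real.log (Real.sin u))) := by
    apply intervalIntegral.integral_congr_ae
    apply ae_of_all
    intro x hmem
    rw [uIoc_of_le (by positivity)] at hmem
    have hs : 0 < Real.sin x := Real.sin_pos_of_pos_of_lt_pi hmem.1
      (lt_of_le_of_lt hmem.2 (by linarith))
    rw [Real.log_mul two_ne_zero (ne_of_gt hs)]
    ring
  rw [hexp, integral_add
      ((Continuous.intervalIntegrable (by continuity) _ _))
      (intInt_log_sin.add intInt_cos2_log_sin),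
    integral_add intInt_log_sin intInt_cos2_log_sin,
    intervalIntegral.integral_mul_const, int_one_add_cos2, int_log_sin, int_cos2_log_sin]
  ring

lemma image_phi : (fun u => 4 * Real.sin u ^ 2) '' (Ioo 0 (π/2)) = Ioo (0:ℝ) 4 := by
  have hpi := Real.pi_pos
  ext t
  constructor
  · rintro ⟨u, ⟨h0, h2⟩, rfl⟩
    have hs : 0 < Real.sin u := Real.sin_pos_of_pos_of_lt_pi h0 (by linarith)
    have hs1 : Real.sin u < 1 := by
      have := Real.strictMonoOn_sin (Set.mem_Icc.2 ⟨by linarith, by linarith⟩)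
        (Set.mem_Icc.2 ⟨by linarith, le_refl _⟩) h2
      simpa using this
    simp only [mem_Ioo]
    constructor
    · positivity
    · nlinarith
  · rintro ⟨ht0, ht4⟩
    refine ⟨Real.arcsin (Real.sqrt t / 2), ⟨?_, ?_⟩, ?_⟩
    · rw [Real.arcsin_pos]; positivity
    · rw [Real.arcsin_lt_pi_div_two]
      rw [div_lt_one (by norm_num)]
      rw [show (2:ℝ) = Real.sqrt 4 by rw [show (4:ℝ) = 2^2 by norm_num, Real.sqrt_sq]; norm_num]
      exact Real.sqrt_lt_sqrt ht0.le ht4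
    · have h1 : Real.sqrt t / 2 ≤ 1 := by
        rw [div_le_one (by norm_num)]
        rw [show (2:ℝ) = Real.sqrt 4 by rw [show (4:ℝ) = 2^2 by norm_num, Real.sqrt_sq]; norm_num]
        exact Real.sqrt_le_sqrt ht4.le
      show 4 * Real.sin (Real.arcsin (Real.sqrt t / 2)) ^ 2 = t
      rw [Real.sin_arcsin (by nlinarith [Real.sqrt_nonneg t]) h1]
      rw [div_pow, Real.sq_sqrt ht0.le]
      ring

lemma inj_phi : InjOn (fun u => 4 * Real.sin u ^ 2) (Ioo 0 (π/2)) := by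
  have hpi := Real.pi_pos
  intro u hu v hv h
  simp only at h
  have hsu : 0 < Real.sin u := Real.sin_pos_of_pos_of_lt_pi hu.1 (by linarith [hu.2])
  have hsv : 0 < Real.sin v := Real.sin_pos_of_pos_of_lt_pi hv.1 (by linarith [hv.2])
  have hsin : Real.sin u = Real.sin v := by nlinarith
  exact Real.injOn_sin ⟨by linarith [hu.1], by linarith [hu.2]⟩
    ⟨by linarith [hv.1], by linarith [hv.2]⟩ hsin

lemma deriv_phi : ∀ u ∈ Ioo (0:ℝ) (π/2), HasDerivWithinAt (fun u => 4 * Real.sin u ^ 2)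
    (4 * Real.sin (2*u)) (Ioo (0:ℝ) (π/2)) u := by
  intro u hu
  have h : HasDerivAt (fun u => 4 * Real.sin u ^ 2)
      (4 * (2 * Real.sin u ^ 1 * Real.cos u)) u := ((Real.hasDerivAt_sin u).pow 2).const_mul 4
  have he : 4 * (2 * Real.sin u ^ 1 * Real.cos u) = 4 * Real.sin (2*u) := by
    rw [Real.sin_two_mul]; ring
  rw [he] at h
  exact h.hasDerivWithinAt

lemma cov (g : ℝ → ℝ) : ∫ t in (0:ℝ)..4, g t
    = ∫ u in Ioo (0:ℝ) (π/2), |4 * Real.sin (2*u)| * g (4 * Real.sin u ^ 2) := by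
  rw [intervalIntegral.integral_of_le (by norm_num : (0:ℝ) ≤ 4), integral_Ioc_eq_integral_Ioo,
    ← image_phi, integral_image_eq_integral_abs_deriv_smul measurableSet_Ioo deriv_phi inj_phi]
  simp only [smul_eq_mul]

lemma phi_facts {u : ℝ} (hu : u ∈ Ioo (0:ℝ) (π/2)) :
    |4 * Real.sin (2*u)| * (1 / π * Real.sqrt (1 / (4 * Real.sin u ^ 2) - 1 / 4))
      = 2/π * (1 + Real.cos (2*u)) ∧
    Real.log (4 * Real.sin u ^ 2) = 2 * Real.log (2 * Real.sin u) := by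
  have hpi := Real.pi_pos
  have hs : 0 < Real.sin u := Real.sin_pos_of_pos_of_lt_pi hu.1 (by linarith [hu.2])
  have hc : 0 < Real.cos u := Real.cos_pos_of_mem_Ioo ⟨by linarith [hu.1], hu.2⟩
  have hs2 : 0 < Real.sin (2*u) :=
    Real.sin_pos_of_pos_of_lt_pi (by linarith [hu.1]) (by linarith [hu.2])
  have habs : |4 * Real.sin (2*u)| = 4 * Real.sin (2*u) := abs_of_pos (by linarith)
  have hrad : 1 / (4 * Real.sin u ^ 2) - 1 / 4 = (Real.cos u / (2 * Real.sin u))^2 := by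
    have hcs : Real.cos u ^ 2 = 1 - Real.sin u ^ 2 := Real.cos_sq' u
    field_simp
    nlinarith [hcs]
  have hsq : Real.sqrt ((Real.cos u / (2 * Real.sin u))^2) = Real.cos u / (2 * Real.sin u) :=
    Real.sqrt_sq (by positivity)
  constructor
  · rw [habs, hrad, hsq, Real.sin_two_mul, Real.cos_two_mul]
    field_simp
    ring
  · rw [show (4 : ℝ) * Real.sin u ^ 2 = (2 * Real.sin u)^2 by ring, Real.log_pow]
    push_cast
    ring

/-- `∫_0^4 ln(λ) (1/π)√(1/λ - 1/4) dλ = -1`; hence the high-SNR asymptotic normalized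
capacity is `∫_0^4 log₂(ρλ) g(λ) dλ + log₂ w₁ = log₂(ρ/e) + log₂ w₁`. -/
theorem mp_log_integral_and_high_snr (ρ w₁ : ℝ) (hρ : 0 < ρ) (hw : 0 < w₁) :
    (∫ t in (0:ℝ)..4, Real.log t * (1 / π * Real.sqrt (1 / t - 1 / 4)) = -1)
    ∧ (∫ t in (0:ℝ)..4, Real.logb 2 (ρ * t) * (1 / π * Real.sqrt (1 / t - 1 / 4)))
          + Real.logb 2 w₁
        = Real.logb 2 (ρ / Real.exp 1) + Real.logb 2 w₁ := by
  have hpi := Real.pi_pos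
  have hlog2 : Real.log 2 ≠ 0 := ne_of_gt (Real.log_pos (by norm_num))
  constructor
  · rw [cov (fun t => Real.log t * (1 / π * Real.sqrt (1 / t - 1 / 4)))]
    have heq : ∫ u in Ioo (0:ℝ) (π/2), |4 * Real.sin (2*u)| *
          (Real.log (4 * Real.sin u ^ 2) *
            (1 / π * Real.sqrt (1 / (4 * Real.sin u ^ 2) - 1 / 4)))
        = ∫ u in Ioo (0:ℝ) (π/2),
            (4/π) * ((1 + Real.cos (2*u)) * Real.log (2 * Real.sin u)) := by
      apply setIntegral_congr_fun measurableSet_Ioo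
      intro u hu
      obtain ⟨h1, h2⟩ := phi_facts hu
      simp only
      rw [h2, show |4 * Real.sin (2*u)| *
          (2 * Real.log (2 * Real.sin u) * (1 / π * Real.sqrt (1 / (4 * Real.sin u ^ 2) - 1/4)))
        = |4 * Real.sin (2*u)| * (1 / π * Real.sqrt (1 / (4 * Real.sin u ^ 2) - 1/4))
            * (2 * Real.log (2 * Real.sin u)) by ring, h1]
      ring
    rw [heq, ← integral_Ioc_eq_integral_Ioo,
      ← intervalIntegral.integral_of_le (le_of_lt (by positivity)),
      intervalIntegral.integral_const_mul, int_C]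
    field_simp
  · congr 1
    rw [cov (fun t => Real.logb 2 (ρ * t) * (1 / π * Real.sqrt (1 / t - 1 / 4)))]
    have heq : ∫ u in Ioo (0:ℝ) (π/2), |4 * Real.sin (2*u)| *
          (Real.logb 2 (ρ * (4 * Real.sin u ^ 2)) *
            (1 / π * Real.sqrt (1 / (4 * Real.sin u ^ 2) - 1 / 4)))
        = ∫ u in Ioo (0:ℝ) (π/2),
            ((2 * Real.log ρ / (π * Real.log 2)) * (1 + Real.cos (2*u))
              + (4 / (π * Real.log 2)) * ((1 + Real.cos (2*u)) * Real.log (2 * Real.sin u))) := by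
      apply setIntegral_congr_fun measurableSet_Ioo
      intro u hu
      obtain ⟨h1, h2⟩ := phi_facts hu
      have hs : 0 < Real.sin u := Real.sin_pos_of_pos_of_lt_pi hu.1 (by linarith [hu.2])
      simp only
      have hlogb : Real.logb 2 (ρ * (4 * Real.sin u ^ 2))
          = (Real.log ρ + 2 * Real.log (2 * Real.sin u)) / Real.log 2 := by
        rw [Real.logb, Real.log_mul (ne_of_gt hρ) (by positivity), h2]
      rw [hlogb, show |4 * Real.sin (2*u)| *
          ((Real.log ρ + 2 * Real.log (2 * Real.sin u)) / Real.log 2 *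
            (1 / π * Real.sqrt (1 / (4 * Real.sin u ^ 2) - 1/4)))
        = |4 * Real.sin (2*u)| * (1 / π * Real.sqrt (1 / (4 * Real.sin u ^ 2) - 1/4))
            * ((Real.log ρ + 2 * Real.log (2 * Real.sin u)) / Real.log 2) by ring, h1]
      field_simp
      ring
    rw [heq, ← integral_Ioc_eq_integral_Ioo,
      ← intervalIntegral.integral_of_le (le_of_lt (by positivity)),
      integral_add (intInt_one_add_cos2.const_mul _) (intInt_C.const_mul _),
      intervalIntegral.integral_const_mul, intervalIntegral.integral_const_mul,
      int_one_add_cos2, int_C, Real.logb, Real.log_div (ne_of_gt hρ) (Real.exp_ne_zero 1),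
      Real.log_exp]
    field_simp
    ring
end
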